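/- Let q be a prime power and n a positive integer with gcd(n, q) = 1. Let α be a primitive n-th root of unity in an extension field of F_q, and let Z ⊆ {0, 1, …, n−1} be a set closed under multiplication by q modulo n (a union of q-ary cyclotomic cosets). Let C = {c ∈ F_q^n : Σ_{i=0}^{n−1} c_i α^{iz} = 0 for all z ∈ Z} be the cyclic code with defining set Z. Then C^⊥ ⊆ C if and only if Z ∩ Z^{−1} = ∅, where Z^{−1} = {(−z) mod n : z ∈ Z}. -/

import Mathlib

/-!
Write `S_z(y) = ∑ y_i α^(i z)` for the syndromes, `q = |F|` and `m` for the order of `q` modulo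
`n`. For `s, t : ℕ` the word `w(i) = ∑_{k<m} α^((t + i s) q^k)` is fixed by `x ↦ x^q`, so it
has entries in `F` (it is the trace of `α^(t + i s)` down to `F`). Summing roots of unity gives
`S_z(w) = n ∑_{k < m, n ∣ s q^k + z} α^(t q^k)` and `⟨x, w⟩ = ∑_{k<m} α^(t q^k) S_{s q^k}(x)`.
As `Z` is stable under multiplication by `q`, the first formula puts `w` in `C` when `-s ∉ Z`
and the second puts `w` in `C^⊥` when `s ∈ Z`. Letting `t` vary, both become Vandermonde
systems in the distinct values `α^(q^k)`. So every `y ∈ C^⊥` has `S_s(y) = 0` when `-s ∉ Z`,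
whence `C^⊥ ⊆ C` if `Z ∩ -Z = ∅`; and if `s, -s ∈ Z`, then some `w ∈ C^⊥` has `S_{-s}(w) ≠ 0`,
because its `k = 0` coefficient is `n ≠ 0`.
-/

/-- Cyclic code of length `n` over `F` with defining set `Z`: all words `c`
such that `∑ i, c i * α ^ (i*z) = 0` for every `z ∈ Z`. -/
def cyclicCode (F : Type*) {E : Type*} [Field F] [Field E] [Algebra F E]
    (n : ℕ) (α : E) (Z : Finset ℕ) : Submodule F (Fin n → F) where
  carrier := {c | ∀ z ∈ Z, ∑ i : Fin n, algebraMap F E (c i) * α ^ ((i : ℕ) * z) = 0}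
  zero_mem' := by intro z _; simp
  add_mem' := by
    intro a b ha hb z hz
    have hA := ha z hz
    have hB := hb z hz
    simp only [Pi.add_apply, map_add, add_mul]
    rw [Finset.sum_add_distrib, hA, hB, add_zero]
  smul_mem' := by
    intro r a ha z hz
    have hA := ha z hz
    simp only [Pi.smul_apply, smul_eq_mul, map_mul, mul_assoc]
    rw [← Finset.mul_sum, hA, mul_zero]

/-- Euclidean dual of a set of codewords. -/
def dualSet {F : Type*} [Field F] {n : ℕ} (C : Set (Fin n → F)) : Set (Fin n → F) :=
  {y | ∀ x ∈ C, ∑ i, x i * y i = 0}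

open Finset Polynomial

theorem Nat.exists_pow_modEq_one_of_coprime {q n : ℕ} (h : q.Coprime n) :
    ∃ m, 0 < m ∧ q ^ m ≡ 1 [MOD n] ∧
      ∀ k < m, ∀ l < m, q ^ k ≡ q ^ l [MOD n] → k = l := by
  set u := ZMod.unitOfCoprime q h
  have hu (k l : ℕ) : q ^ k ≡ q ^ l [MOD n] ↔ u ^ k = u ^ l := by
    rw [← ZMod.natCast_eq_natCast_iff, Units.ext_iff]
    push_cast [u, ZMod.coe_unitOfCoprime]
    rfl
  refine ⟨orderOf u, orderOf_pos u, ?_, fun k hk l hl hkl => ?_⟩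
  · simpa using (hu _ 0).mpr (by rw [pow_orderOf_eq_one, pow_zero])
  · exact pow_injOn_Iio_orderOf hk hl ((hu k l).mp hkl)

theorem Nat.dvd_add_mul_pow_sub_mod {n q m k s z : ℕ} (hqm : q ^ m ≡ 1 [MOD n]) (hk : k ≤ m)
    (h : n ∣ s * q ^ k + z) : n ∣ s + z * q ^ (m - k) % n := by
  rw [← ZMod.natCast_eq_zero_iff] at h ⊢
  have hq : (q : ZMod n) ^ m = 1 := by exact_mod_cast (ZMod.natCast_eq_natCast_iff _ _ _).mpr hqm
  push_cast [ZMod.natCast_mod] at h ⊢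
  calc (s : ZMod n) + z * q ^ (m - k) = (s * q ^ k + z) * q ^ (m - k) := by
        rw [add_mul, mul_assoc, ← pow_add, Nat.add_sub_cancel' hk, hq, mul_one]
    _ = 0 := by rw [h, zero_mul]

theorem Nat.dvd_add_sub_mod {n z : ℕ} (hz : z ≤ n) : n ∣ z + (n - z) % n := by
  rw [Nat.dvd_iff_mod_eq_zero, Nat.add_mod_mod, Nat.add_sub_cancel' hz, Nat.mod_self]

theorem Nat.sub_mod_eq_of_dvd_add {n z z' : ℕ} (hz : z < n) (hz' : z' ≤ n) (h : n ∣ z' + z) :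
    (n - z') % n = z := by
  obtain ⟨c, hc⟩ := h
  calc (n - z') % n = (n - z' + n * c) % n := (Nat.add_mul_mod_self_left _ _ _).symm
    _ = (z + n * 1) % n := by rw [← hc, mul_one]; congr 1; omega
    _ = z := by rw [Nat.add_mul_mod_self_left, Nat.mod_eq_of_lt hz]

theorem mul_pow_mod_mem {n q : ℕ} {Z : Finset ℕ} (hZn : ∀ z ∈ Z, z < n)
    (hZq : ∀ z ∈ Z, z * q % n ∈ Z) {z : ℕ} (hz : z ∈ Z) (k : ℕ) :
    z * q ^ k % n ∈ Z := by
  induction k with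
  | zero => rwa [pow_zero, mul_one, Nat.mod_eq_of_lt (hZn z hz)]
  | succ k ih => rw [pow_succ, ← mul_assoc, ← Nat.mod_mul_mod]; exact hZq _ ih

theorem pow_pow_eq_self_of_modEq {M : Type*} [Monoid M] {α : M} {n a : ℕ} (hα : α ^ n = 1)
    (ha : a ≡ 1 [MOD n]) (e : ℕ) : (α ^ e) ^ a = α ^ e := by
  have hmod : e * a ≡ e [MOD n] := by simpa using ha.mul_left e
  rw [← pow_mul, pow_eq_pow_mod _ hα, (hmod : e * a % n = e % n), ← pow_eq_pow_mod _ hα]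

theorem IsPrimitiveRoot.sum_pow_mul_eq_ite {R : Type*} [CommRing R] [IsDomain R] {α : R} {n : ℕ}
    (hα : IsPrimitiveRoot α n) (u : ℕ) :
    ∑ i : Fin n, α ^ ((i : ℕ) * u) = if n ∣ u then (n : R) else 0 := by
  simp_rw [mul_comm _ u, pow_mul]
  rw [Fin.sum_univ_eq_sum_range (fun i => (α ^ u) ^ i)]
  split_ifs with h
  · simp [(hα.pow_eq_one_iff_dvd u).mpr h]
  · have hmul := geom_sum_mul (α ^ u) n
    rw [← pow_mul, mul_comm u, pow_mul, hα.pow_eq_one, one_pow, sub_self] at hmul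
    exact (mul_eq_zero.mp hmul).resolve_right
      (sub_ne_zero.mpr (mt (hα.pow_eq_one_iff_dvd u).mp h))

theorem eq_zero_of_forall_sum_range_pow_mul_eq_zero {R : Type*} [CommRing R] [IsDomain R]
    {m : ℕ} {v c : ℕ → R} (hv : Set.InjOn v (range m))
    (h : ∀ t, ∑ k ∈ range m, v k ^ t * c k = 0) {k : ℕ} (hk : k < m) : c k = 0 := by
  have hc := Matrix.eq_zero_of_forall_pow_sum_mul_pow_eq_zero (f := fun j : Fin m => v j)
    (v := fun j : Fin m => c j) (fun j j' hjj' => Fin.ext (hv (by simp) (by simp) hjj'))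
    (fun t => by
      rw [Fin.sum_univ_eq_sum_range (fun j => c j * v j ^ (t : ℕ))]
      simpa only [mul_comm] using h t)
  exact congrFun hc ⟨k, hk⟩

theorem natCast_ne_zero_of_coprime_card {F R : Type*} [Field F] [Fintype F] [CommRing R]
    [Nontrivial R] [Algebra F R] {n : ℕ} (h : n.Coprime (Fintype.card F)) : (n : R) ≠ 0 := by
  have hq : (Fintype.card F : R) = 0 := by
    rw [← map_natCast (algebraMap F R), Nat.cast_card_eq_zero, map_zero]
  have hcop := (Nat.isCoprime_iff_coprime.mpr h).map (Int.castRingHom R)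
  rw [map_natCast, map_natCast, hq, isCoprime_zero_right] at hcop
  exact hcop.ne_zero

theorem FiniteField.exists_algebraMap_eq_of_pow_card_eq {F R : Type*} [Field F] [Fintype F]
    [CommRing R] [IsDomain R] [Algebra F R] {x : R} (hx : x ^ Fintype.card F = x) :
    ∃ a : F, algebraMap F R a = x := by
  have hroots := roots_map_of_injective_of_card_eq_natDegree (algebraMap F R).injective
    (p := X ^ Fintype.card F - X) (by
      rw [roots_X_pow_card_sub_X, X_pow_card_sub_X_natDegree_eq F Fintype.one_lt_card]
      rfl)
  have hmem : x ∈ ((X ^ Fintype.card F - X : F[X]).map (algebraMap F R)).roots := by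
    rw [mem_roots (Polynomial.map_ne_zero (X_pow_card_sub_X_ne_zero F Fintype.one_lt_card))]
    simp [hx]
  rw [← hroots, roots_X_pow_card_sub_X] at hmem
  simpa using hmem

def frobeniusTrace (F : Type*) [Fintype F] {R : Type*} [CommRing R] (m : ℕ) (x : R) : R :=
  ∑ k ∈ range m, x ^ Fintype.card F ^ k

theorem frobeniusTrace_pow_card {F R : Type*} [Field F] [Fintype F] [CommRing R] [Algebra F R]
    {m : ℕ} {x : R} (hx : x ^ Fintype.card F ^ m = x) :
    frobeniusTrace F m x ^ Fintype.card F = frobeniusTrace F m x := by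
  have hfrob :=
    map_sum (FiniteField.frobeniusAlgHom F R) (fun k => x ^ Fintype.card F ^ k) (range m)
  rw [FiniteField.coe_frobeniusAlgHom] at hfrob
  simp only [← pow_mul, ← pow_succ] at hfrob
  have hshift := sum_range_succ' (fun k => x ^ Fintype.card F ^ k) m
  rw [sum_range_succ, hx, pow_zero, pow_one] at hshift
  rw [frobeniusTrace, hfrob, add_right_cancel hshift.symm]

theorem exists_algebraMap_eq_frobeniusTrace {F R : Type*} [Field F] [Fintype F] [CommRing R]
    [IsDomain R] [Algebra F R] {m : ℕ} {x : R} (hx : x ^ Fintype.card F ^ m = x) :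
    ∃ a : F, algebraMap F R a = frobeniusTrace F m x :=
  FiniteField.exists_algebraMap_eq_of_pow_card_eq (frobeniusTrace_pow_card hx)

theorem sum_frobeniusTrace_mul (F : Type*) [Fintype F] {R : Type*} [CommRing R] {n : ℕ}
    (α : R) (a : Fin n → R) (m s t : ℕ) :
    ∑ i : Fin n, frobeniusTrace F m (α ^ (t + i * s)) * a i =
      ∑ k ∈ range m, (α ^ Fintype.card F ^ k) ^ t *
        ∑ i : Fin n, a i * α ^ ((i : ℕ) * (s * Fintype.card F ^ k)) := by
  simp only [frobeniusTrace, sum_mul, mul_sum]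
  rw [sum_comm]
  exact sum_congr rfl fun k _ => sum_congr rfl fun i _ => by ring

section Syndrome

variable {F E : Type*} [Field F] [Field E] [Algebra F E] {n : ℕ}

def syndrome (α : E) (y : Fin n → F) (z : ℕ) : E :=
  ∑ i : Fin n, algebraMap F E (y i) * α ^ ((i : ℕ) * z)

theorem syndrome_mod {α : E} (hα : α ^ n = 1) (y : Fin n → F) (z : ℕ) :
    syndrome α y (z % n) = syndrome α y z := by
  unfold syndrome
  congr! 2 with i
  rw [pow_eq_pow_mod _ hα, pow_eq_pow_mod (_ * z) hα, Nat.mul_mod, Nat.mod_mod, ← Nat.mul_mod]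

variable [Fintype F] {α : E} {m s : ℕ}

local notation "q" => Fintype.card F

theorem syndrome_eq_of_frobeniusTrace (hα : IsPrimitiveRoot α n) {t : ℕ} {w : Fin n → F}
    (hw : ∀ i, algebraMap F E (w i) = frobeniusTrace F m (α ^ (t + i * s))) (z : ℕ) :
    syndrome α w z =
      ∑ k ∈ range m, (α ^ q ^ k) ^ t * if n ∣ s * q ^ k + z then (n : E) else 0 := by
  simp only [syndrome, hw]
  rw [sum_frobeniusTrace_mul F]
  refine sum_congr rfl fun k _ => ?_
  rw [← hα.sum_pow_mul_eq_ite]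
  exact congrArg _ (sum_congr rfl fun i _ => by ring)

theorem algebraMap_sum_mul_eq_of_frobeniusTrace {t : ℕ} {w : Fin n → F}
    (hw : ∀ i, algebraMap F E (w i) = frobeniusTrace F m (α ^ (t + i * s))) (x : Fin n → F) :
    algebraMap F E (∑ i, w i * x i) =
      ∑ k ∈ range m, (α ^ q ^ k) ^ t * syndrome α x (s * q ^ k) := by
  simp only [map_sum, map_mul, hw, syndrome]
  exact sum_frobeniusTrace_mul F ..

theorem mem_cyclicCode_of_frobeniusTrace {Z : Finset ℕ} (hα : IsPrimitiveRoot α n)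
    (hqm : q ^ m ≡ 1 [MOD n]) (hZ : ∀ z ∈ Z, ∀ k, z * q ^ k % n ∈ Z)
    (hs : ∀ z ∈ Z, ¬ n ∣ s + z) {t : ℕ} {w : Fin n → F}
    (hw : ∀ i, algebraMap F E (w i) = frobeniusTrace F m (α ^ (t + i * s))) :
    w ∈ cyclicCode F n α Z := by
  intro z hz
  refine (syndrome_eq_of_frobeniusTrace hα hw z).trans (sum_eq_zero fun k hk => ?_)
  rw [if_neg, mul_zero]
  exact fun hdvd =>
    hs _ (hZ z hz (m - k)) (Nat.dvd_add_mul_pow_sub_mod hqm (mem_range.mp hk).le hdvd)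

theorem frobeniusTrace_mem_dualSet {Z : Finset ℕ} (hα : IsPrimitiveRoot α n)
    (hZ : ∀ z ∈ Z, ∀ k, z * q ^ k % n ∈ Z) (hs : s ∈ Z) {t : ℕ} {w : Fin n → F}
    (hw : ∀ i, algebraMap F E (w i) = frobeniusTrace F m (α ^ (t + i * s))) :
    w ∈ dualSet (cyclicCode F n α Z : Set (Fin n → F)) := by
  intro x hx
  apply (algebraMap F E).injective
  simp_rw [mul_comm (x _), algebraMap_sum_mul_eq_of_frobeniusTrace hw, map_zero]
  refine sum_eq_zero fun k _ => ?_
  have hsyn : syndrome α x (s * q ^ k % n) = 0 := hx _ (hZ s hs k)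
  rw [← syndrome_mod hα.pow_eq_one, hsyn, mul_zero]

theorem syndrome_eq_zero_of_mem_dualSet (hinj : Set.InjOn (fun k => α ^ q ^ k) (range m))
    (hm : 0 < m) {w : ℕ → Fin n → F}
    (hw : ∀ t i, algebraMap F E (w t i) = frobeniusTrace F m (α ^ (t + i * s)))
    {C : Set (Fin n → F)} (hwC : ∀ t, w t ∈ C) {y : Fin n → F} (hy : y ∈ dualSet C) :
    syndrome α y s = 0 := by
  have hvan (t : ℕ) : ∑ k ∈ range m, (α ^ q ^ k) ^ t * syndrome α y (s * q ^ k) = 0 := by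
    rw [← algebraMap_sum_mul_eq_of_frobeniusTrace (hw t), hy _ (hwC t), map_zero]
  simpa using eq_zero_of_forall_sum_range_pow_mul_eq_zero hinj hvan hm

theorem exists_syndrome_frobeniusTrace_ne_zero (hα : IsPrimitiveRoot α n)
    (hinj : Set.InjOn (fun k => α ^ q ^ k) (range m)) (hm : 0 < m) {w : ℕ → Fin n → F}
    (hw : ∀ t i, algebraMap F E (w t i) = frobeniusTrace F m (α ^ (t + i * s)))
    (hn : (n : E) ≠ 0) {z : ℕ} (h : n ∣ s + z) : ∃ t, syndrome α (w t) z ≠ 0 := by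
  by_contra! hall
  have hvan (t : ℕ) :
      ∑ k ∈ range m, (α ^ q ^ k) ^ t * (if n ∣ s * q ^ k + z then (n : E) else 0) = 0 := by
    rw [← syndrome_eq_of_frobeniusTrace hα (hw t), hall t]
  exact hn (by simpa [h] using eq_zero_of_forall_sum_range_pow_mul_eq_zero hinj hvan hm)

end Syndrome

theorem cyclic_contains_euclidean_dual_iff_general
    (q n : ℕ) (hn : 0 < n) (hgcd : Nat.gcd n q = 1)
    (F E : Type*) [Field F] [Fintype F] [Field E] [Algebra F E]
    (hF : Fintype.card F = q)
    (α : E) (hα : IsPrimitiveRoot α n)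
    (Z : Finset ℕ) (hZn : ∀ z ∈ Z, z < n) (hZq : ∀ z ∈ Z, z * q % n ∈ Z) :
    dualSet (cyclicCode F n α Z : Set (Fin n → F)) ⊆
        (cyclicCode F n α Z : Set (Fin n → F)) ↔
      Z ∩ Z.image (fun z => (n - z) % n) = ∅ := by
  subst hF
  obtain ⟨m, hm, hqm, hqinj⟩ := Nat.exists_pow_modEq_one_of_coprime (Nat.coprime_comm.mp hgcd)
  have hinj : Set.InjOn (fun k => α ^ Fintype.card F ^ k) (range m) := fun k hk l hl hkl =>
    hqinj k (mem_range.mp hk) l (mem_range.mp hl)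
      (hα.eq_orderOf ▸ (hα.isOfFinOrder hn.ne').pow_eq_pow_iff_modEq.mp hkl)
  have hZ (z : ℕ) (hz : z ∈ Z) (k : ℕ) : z * Fintype.card F ^ k % n ∈ Z :=
    mul_pow_mod_mem hZn hZq hz k
  choose w hw using fun (s t : ℕ) (i : Fin n) => exists_algebraMap_eq_frobeniusTrace (F := F)
    (pow_pow_eq_self_of_modEq hα.pow_eq_one hqm (t + i * s))
  constructor
  · intro hsub
    refine eq_empty_of_forall_notMem fun z hz => ?_
    obtain ⟨hzZ, hzI⟩ := mem_inter.mp hz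
    obtain ⟨s, hsZ, rfl⟩ := mem_image.mp hzI
    obtain ⟨t, ht⟩ := exists_syndrome_frobeniusTrace_ne_zero hα hinj hm (hw s)
      (natCast_ne_zero_of_coprime_card hgcd) (Nat.dvd_add_sub_mod (hZn s hsZ).le)
    exact ht (hsub (frobeniusTrace_mem_dualSet hα hZ hsZ (hw s t)) _ hzZ)
  · intro hdisj y hy z hz
    refine syndrome_eq_zero_of_mem_dualSet hinj hm (hw z) (fun t => ?_) hy
    refine mem_cyclicCode_of_frobeniusTrace hα hqm hZ (fun z' hz' hdvd => ?_) (hw z t)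
    have hzI : z ∈ Z.image (fun z => (n - z) % n) := mem_image.mpr
      ⟨z', hz', Nat.sub_mod_eq_of_dvd_add (hZn z hz) (hZn z' hz').le (by rwa [add_comm])⟩
    simpa [hdisj] using mem_inter.mpr ⟨hz, hzI⟩

/-- A cyclic code of length `n` over `F_q`, `gcd(n,q) = 1`, with defining set `Z`
contains its Euclidean dual code iff `Z ∩ Z⁻¹ = ∅`, where
`Z⁻¹ = {-z mod n : z ∈ Z}`. -/
theorem cyclic_contains_euclidean_dual_iff
    (q n : ℕ) (hq : IsPrimePow q) (hn : 0 < n) (hgcd : Nat.gcd n q = 1)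
    (F E : Type*) [Field F] [Fintype F] [Field E] [Algebra F E]
    (hF : Fintype.card F = q)
    (α : E) (hα : IsPrimitiveRoot α n)
    (Z : Finset ℕ) (hZn : ∀ z ∈ Z, z < n) (hZq : ∀ z ∈ Z, z * q % n ∈ Z) :
    dualSet (cyclicCode F n α Z : Set (Fin n → F)) ⊆
        (cyclicCode F n α Z : Set (Fin n → F)) ↔
      Z ∩ Z.image (fun z => (n - z) % n) = ∅ :=
  cyclic_contains_euclidean_dual_iff_general q n hn hgcd F E hF α hα Z hZn hZq
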